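/- Fix α > 0 with α ≠ 1 and let 𝔤 = 𝔤^α_{3.4} ⊕ 𝔤₁ be the 4-dimensional real Lie algebra with basis e₁,...,e₄ and nonzero brackets [e₂,e₃] = e₁ − αe₂ and [e₃,e₁] = αe₁ − e₂. A 4×4 real matrix R equals η·Id + D for some η ∈ ℝ and some derivation D of 𝔤 if and only if R₃₁ = R₄₁ = R₃₂ = R₄₂ = 0, R₁₄ = R₂₄ = R₃₄ = 0, R₂₁ = R₁₂, and R₂₂ = R₁₁. In this case η = R₃₃. -/

import Mathlib

/-!
A derivation `D` preserves the derived algebra `span {e₁, e₂}` and the centre, which is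
`span {e₄}` because `α² ≠ 1` makes `ad e₃` invertible on `span {e₁, e₂}`. On the derived algebra
the derivation rule for `e₃` reads `[D, ad e₃] = d · ad e₃`, where `d` is the `e₃`-coefficient of
`D e₃`; as `ad e₃ = α - J` with `J` swapping `e₁` and `e₂`, this forces `d = 0` and `D = a + b J`
there. Adding `η • 1` then frees exactly the diagonal entry `R₃₃ = η`.
(Indices here are the paper's; Lean's `Fin 4` indices are one less.)
-/

open Matrix

/-- The Lie bracket of the Lie algebra, in coordinates. -/
def br (α : ℝ) (x y : Fin 4 → ℝ) : Fin 4 → ℝ :=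
  ![(x 1 * y 2 - x 2 * y 1) + α * (x 2 * y 0 - x 0 * y 2), -(α * (x 1 * y 2 - x 2 * y 1)) - (x 2 * y 0 - x 0 * y 2), (0:ℝ), (0:ℝ)]

/-- `D` (acting via `mulVec`) is a derivation of the bracket. -/
def IsDer (α : ℝ) (D : Matrix (Fin 4) (Fin 4) ℝ) : Prop :=
  ∀ x y : Fin 4 → ℝ, D.mulVec (br α x y) = br α (D.mulVec x) y + br α x (D.mulVec y)

def DerEntryConditions (R : Matrix (Fin 4) (Fin 4) ℝ) : Prop :=
  R 2 0 = 0 ∧ R 3 0 = 0 ∧ R 2 1 = 0 ∧ R 3 1 = 0 ∧ R 0 3 = 0 ∧ R 1 3 = 0 ∧ R 2 3 = 0 ∧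
    R 1 0 = R 0 1 ∧ R 1 1 = R 0 0

lemma derEntryConditions_smul_one_add (η : ℝ) (R : Matrix (Fin 4) (Fin 4) ℝ) :
    DerEntryConditions (η • 1 + R) ↔ DerEntryConditions R := by
  simp [DerEntryConditions, one_apply]

lemma eq_zero_and_eq_zero_of_add_mul_eq_zero {α u v : ℝ} (hα : α ^ 2 ≠ 1)
    (h₁ : u + α * v = 0) (h₂ : α * u + v = 0) : u = 0 ∧ v = 0 := by
  have hdet : 1 - α ^ 2 ≠ 0 := sub_ne_zero.2 hα.symm
  constructor
  · exact (mul_eq_zero.1 (by linear_combination h₁ - α * h₂ : (1 - α ^ 2) * u = 0)).resolve_left hdet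
  · exact (mul_eq_zero.1 (by linear_combination h₂ - α * h₁ : (1 - α ^ 2) * v = 0)).resolve_left hdet

section

variable {α : ℝ} {D : Matrix (Fin 4) (Fin 4) ℝ}

lemma isDer_of_derEntryConditions (hD : DerEntryConditions D) (h22 : D 2 2 = 0) :
    IsDer α D := by
  obtain ⟨h20, h30, h21, h31, h03, h13, h23, h10, h11⟩ := hD
  intro x y
  ext i
  fin_cases i <;>
    simp [br, mulVec, dotProduct, Fin.sum_univ_four, h20, h30, h21, h31, h03, h13, h23, h10, h11,
      h22] <;>
    ring

lemma isDer_iff (hα : α ^ 2 ≠ 1) : IsDer α D ↔ DerEntryConditions D ∧ D 2 2 = 0 := by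
  refine ⟨fun hD => ?_, fun h => isDer_of_derEntryConditions h.1 h.2⟩
  have e₁₂ := hD (Pi.single 0 1) (Pi.single 1 1)
  have e₁₃ := hD (Pi.single 0 1) (Pi.single 2 1)
  have e₁₄ := hD (Pi.single 0 1) (Pi.single 3 1)
  have e₂₃ := hD (Pi.single 1 1) (Pi.single 2 1)
  have e₃₄ := hD (Pi.single 2 1) (Pi.single 3 1)
  simp only [funext_iff, Fin.forall_fin_succ, IsEmpty.forall_iff, mulVec, dotProduct, br, ne_eq,
    one_ne_zero, zero_ne_one, not_false_eq_true, Pi.single_eq_of_ne, Pi.single_eq_same, Fin.reduceEq,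
    Fin.isValue, Fin.sum_univ_four, cons_val_zero, cons_val_one, cons_val, Pi.add_apply,
    Fin.succ_zero_eq_one, Fin.succ_one_eq_two, Fin.reduceSucc, mul_zero, mul_one, zero_mul, one_mul,
    sub_self, add_zero, zero_add, neg_zero, zero_sub, sub_zero, mul_neg, neg_neg, sub_neg_eq_add,
    and_self, and_true, zero_eq_neg, mul_eq_zero] at e₁₂ e₁₃ e₁₄ e₂₃ e₃₄
  obtain ⟨h20, h21⟩ := eq_zero_and_eq_zero_of_add_mul_eq_zero (u := D 2 0) (v := D 2 1) hα
    (by linarith [e₁₂.1]) (by linarith [e₁₂.2])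
  obtain ⟨h13, h03⟩ := eq_zero_and_eq_zero_of_add_mul_eq_zero (u := D 1 3) (v := -D 0 3) hα
    (by linarith [e₃₄.1]) (by linarith [e₃₄.2])
  obtain ⟨h30, h31⟩ := eq_zero_and_eq_zero_of_add_mul_eq_zero (u := D 3 0) (v := -D 3 1) hα
    (by linarith [e₂₃.2.2.2]) (by linarith [e₁₃.2.2.2])
  have h22 : D 2 2 = 0 := by linarith [e₁₃.2.1, e₂₃.1]
  have h11 : D 1 1 = D 0 0 := by linarith [e₁₃.2.1, e₂₃.1]
  have h10 : D 1 0 = D 0 1 := by linear_combination -e₁₃.1 + α * h22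
  exact ⟨⟨h20, h30, h21, neg_eq_zero.1 h31, neg_eq_zero.1 h03, h13, e₁₄.2.symm, h10, h11⟩, h22⟩

end

theorem stmt_6 (α : ℝ) (hα : 0 < α) (hα1 : α ≠ 1) (R : Matrix (Fin 4) (Fin 4) ℝ) :
    ((∃ (η : ℝ) (D : Matrix (Fin 4) (Fin 4) ℝ), IsDer α D ∧
        R = η • (1 : Matrix (Fin 4) (Fin 4) ℝ) + D) ↔
      (R 2 0 = 0 ∧ R 3 0 = 0 ∧ R 2 1 = 0 ∧ R 3 1 = 0 ∧ R 0 3 = 0 ∧ R 1 3 = 0 ∧ R 2 3 = 0 ∧ R 1 0 = R 0 1 ∧ R 1 1 = R 0 0)) ∧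
    (∀ (η : ℝ) (D : Matrix (Fin 4) (Fin 4) ℝ), IsDer α D →
      R = η • (1 : Matrix (Fin 4) (Fin 4) ℝ) + D → η = R 2 2) := by
  have hα2 : α ^ 2 ≠ 1 := by
    rw [Ne, sq_eq_one_iff]
    rintro (h | h)
    exacts [hα1 h, by linarith]
  refine ⟨⟨?_, fun hR => ?_⟩, ?_⟩
  · rintro ⟨η, D, hD, rfl⟩
    exact (derEntryConditions_smul_one_add η D).2 ((isDer_iff hα2).1 hD).1
  · refine ⟨R 2 2, R - R 2 2 • 1, (isDer_iff hα2).2 ⟨?_, by simp⟩, by abel⟩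
    rw [sub_eq_neg_add, ← neg_smul]
    exact (derEntryConditions_smul_one_add _ R).2 hR
  · rintro η D hD rfl
    simp [((isDer_iff hα2).1 hD).2]
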